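/- arXiv:1603.01033 — 2 statements merged into one kernel-verified Lean document; each statement's English description precedes it below -/
import Mathlib

section
/- For every (H, S) ∈ 𝒯_E, the set B_H of breaking vertices (each viewed as a length-0 element of X) is contained in the topological closure of U_{H,S} in the boundary path space X. Consequently, if U_{H,S} is closed then S = B_H. -/
namespace GraphLPA

/-- A directed graph: vertices, edges, and source/range maps. -/
structure DirGraph where
  V : Type
  Ed : Type
  src : Ed → V
  rng : Ed → V

/-- A vertex is a sink if it emits no edges. -/
def IsSink (G : DirGraph) (v : G.V) : Prop := ∀ e : G.Ed, G.src e ≠ v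

/-- A vertex is an infinite emitter if it emits infinitely many edges. -/
def IsInfEmitter (G : DirGraph) (v : G.V) : Prop := {e : G.Ed | G.src e = v}.Infinite

/-- A vertex is regular if it is neither a sink nor an infinite emitter. -/
def IsRegular (G : DirGraph) (v : G.V) : Prop := ¬ IsSink G v ∧ ¬ IsInfEmitter G v

/-- A (raw) finite path: a starting vertex together with a list of edges.
A vertex is regarded as the finite path with empty edge list. -/
structure FinPath (G : DirGraph) where
  start : G.V
  edges : List G.Ed

/-- The range of a finite path: the range of its last edge, or its start if it has length 0. -/
def FinPath.range {G : DirGraph} (p : FinPath G) : G.V :=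
  match p.edges.getLast? with
  | none => p.start
  | some e => G.rng e

/-- The validity condition for a finite path: the first edge (if any) starts at `start`,
and consecutive edges are composable. -/
def FinPath.IsPath {G : DirGraph} (p : FinPath G) : Prop :=
  (∀ e ∈ p.edges.head?, G.src e = p.start) ∧
    p.edges.Chain' (fun e f => G.rng e = G.src f)

/-- An infinite sequence of edges is an infinite path if consecutive edges are composable. -/
def InfIsPath (G : DirGraph) (f : ℕ → G.Ed) : Prop :=
  ∀ n, G.rng (f n) = G.src (f (n + 1))

/-- Raw boundary paths: either a finite path or an infinite sequence of edges. -/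
inductive BPath (G : DirGraph) where
  | fin : FinPath G → BPath G
  | inf : (ℕ → G.Ed) → BPath G

/-- The source of a boundary path. -/
def BPath.start {G : DirGraph} : BPath G → G.V
  | .fin p => p.start
  | .inf f => G.src (f 0)

/-- Membership in the boundary path space: a valid finite path whose range
is a sink or infinite emitter, or a valid infinite path. -/
def BPath.IsBoundary {G : DirGraph} : BPath G → Prop
  | .fin p => p.IsPath ∧ (IsSink G p.range ∨ IsInfEmitter G p.range)
  | .inf f => InfIsPath G f

/-- A vertex occurring on a boundary path (the source, or the range of any of its edges). -/
def BPath.vertexOn {G : DirGraph} : BPath G → G.V → Prop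
  | .fin p, v => p.start = v ∨ ∃ e ∈ p.edges, G.rng e = v
  | .inf f, v => G.src (f 0) = v ∨ ∃ n, G.rng (f n) = v

/-- The boundary path space `X` of the graph `G`. -/
def BPS (G : DirGraph) : Type := { x : BPath G // x.IsBoundary }

/-- Concatenation `μx` of a finite path `μ` with a boundary path `x`. -/
def FinPath.catB {G : DirGraph} (μ : FinPath G) : BPath G → BPath G
  | .fin p => .fin ⟨μ.start, μ.edges ++ p.edges⟩
  | .inf f => .inf (fun n => if h : n < μ.edges.length then μ.edges[n] else f (n - μ.edges.length))

/-- The cylinder set `Z(μ) = {μx : x ∈ X, s(x) = r(μ)}`. -/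
def ZSet {G : DirGraph} (μ : FinPath G) : Set (BPS G) :=
  { x | ∃ z : BPS G, z.1.start = μ.range ∧ x.1 = μ.catB z.1 }

/-- The finite path `μe` obtained by appending an edge. -/
def FinPath.extend {G : DirGraph} (μ : FinPath G) (e : G.Ed) : FinPath G :=
  ⟨μ.start, μ.edges ++ [e]⟩

/-- The basic set `Z(μ∖F) = Z(μ) ∖ ⋃_{e ∈ F} Z(μe)`. -/
def ZSetMinus {G : DirGraph} (μ : FinPath G) (F : Finset G.Ed) : Set (BPS G) :=
  ZSet μ \ ⋃ e ∈ F, ZSet (μ.extend e)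

/-- The topology on the boundary path space generated by the sets `Z(μ∖F)`. -/
instance BPS.instTopologicalSpace (G : DirGraph) : TopologicalSpace (BPS G) :=
  TopologicalSpace.generateFrom
    { U | ∃ (μ : FinPath G) (F : Finset G.Ed),
        μ.IsPath ∧ (∀ e ∈ F, G.src e = μ.range) ∧ U = ZSetMinus μ F }

/-- A subset `U ⊆ X` is invariant if whenever `αz ∈ U` with `α, β` finite paths with
`r(α) = r(β)` and `s(z) = r(α)`, then `βz ∈ U`. -/
def IsInvariant {G : DirGraph} (U : Set (BPS G)) : Prop :=
  ∀ α β : FinPath G, α.IsPath → β.IsPath → α.range = β.range →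
    ∀ z : BPS G, z.1.start = α.range →
      ∀ x y : BPS G, x.1 = α.catB z.1 → y.1 = β.catB z.1 → x ∈ U → y ∈ U

/-- A set of vertices is hereditary if it is closed under ranges of edges out of it. -/
def Hereditary (G : DirGraph) (H : Set G.V) : Prop :=
  ∀ e : G.Ed, G.src e ∈ H → G.rng e ∈ H

/-- A set of vertices is saturated if it contains every regular vertex all of whose
emitted edges have range in it. -/
def Saturated (G : DirGraph) (H : Set G.V) : Prop :=
  ∀ v : G.V, IsRegular G v → (∀ e : G.Ed, G.src e = v → G.rng e ∈ H) → v ∈ H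

/-- The set `B_H` of breaking vertices of a hereditary set `H`. -/
def BreakVerts (G : DirGraph) (H : Set G.V) : Set G.V :=
  { v | v ∉ H ∧ IsInfEmitter G v ∧
      { e : G.Ed | G.src e = v ∧ G.rng e ∉ H }.Finite ∧
      { e : G.Ed | G.src e = v ∧ G.rng e ∉ H }.Nonempty }

/-- `U_H`: the boundary paths on which some vertex of `H` occurs. -/
def UH {G : DirGraph} (H : Set G.V) : Set (BPS G) :=
  { x | ∃ v ∈ H, x.1.vertexOn v }

/-- `U_S`: the boundary paths that are finite paths with range in `S`. -/
def US {G : DirGraph} (S : Set G.V) : Set (BPS G) :=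
  { x | ∃ p : FinPath G, x.1 = BPath.fin p ∧ p.range ∈ S }

/-- `U_{H,S} = U_H ∪ U_S`. -/
def UHS {G : DirGraph} (H S : Set G.V) : Set (BPS G) := UH H ∪ US S

/-- `H_U = {v : Z(v) ⊆ U}`. -/
def HOf {G : DirGraph} (U : Set (BPS G)) : Set G.V :=
  { v | ZSet (⟨v, []⟩ : FinPath G) ⊆ U }

/-- `S_U`: ranges of finite paths in `U` whose range is an infinite emitter not in `H_U`. -/
def SOf {G : DirGraph} (U : Set (BPS G)) : Set G.V :=
  { w | ∃ x ∈ U, ∃ p : FinPath G, x.1 = BPath.fin p ∧ p.range = w ∧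
      IsInfEmitter G w ∧ w ∉ HOf U }

/-- `Path(v, H)`: the finite paths of positive length with source `v` and range in `H`. -/
def PathTo {G : DirGraph} (v : G.V) (H : Set G.V) : Set (FinPath G) :=
  { p | p.IsPath ∧ p.start = v ∧ p.edges ≠ [] ∧ p.range ∈ H }

/-- Condition (a): every infinite path all of whose vertices lie outside `H`
eventually does not connect to `H`. -/
def CondA (G : DirGraph) (H : Set G.V) : Prop :=
  ∀ f : ℕ → G.Ed, InfIsPath G f →
    (G.src (f 0) ∉ H ∧ ∀ n, G.rng (f n) ∉ H) →
    ∃ N : ℕ, PathTo (G.rng (f N)) H = ∅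

/-- Condition (b) with target set `S`: every vertex emitting infinitely many edges
that connect to `H` belongs to `H ∪ S`. -/
def CondB (G : DirGraph) (H S : Set G.V) : Prop :=
  ∀ v : G.V,
    { e : G.Ed | G.src e = v ∧ (PathTo (G.rng e) H).Nonempty }.Infinite → v ∈ H ∪ S

/-- An `H`-compatible path: a finite path of positive length with range in `H`
whose last edge has source outside `H ∪ B_H`. -/
def HCompatible {G : DirGraph} (H : Set G.V) (p : FinPath G) : Prop :=
  p.IsPath ∧ p.edges ≠ [] ∧ p.range ∈ H ∧
    ∀ e ∈ p.edges.getLast?, G.src e ∉ H ∪ BreakVerts G H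

/-- `C_{v,H}`: the set of `H`-compatible paths with source `v`. -/
def CSet {G : DirGraph} (v : G.V) (H : Set G.V) : Set (FinPath G) :=
  { p | p.start = v ∧ HCompatible H p }

end GraphLPA

namespace GraphLPA

/-! ### Auxiliary material -/

/-- The generating family for the topology on `BPS G`. -/
def Gens (G : DirGraph) : Set (Set (BPS G)) :=
  { U | ∃ (μ : FinPath G) (F : Finset G.Ed),
      μ.IsPath ∧ (∀ e ∈ F, G.src e = μ.range) ∧ U = ZSetMinus μ F }

/-- Pick an edge out of a non-sink. -/
noncomputable def pick (G : DirGraph) (u : G.V) (h : ¬ IsSink G u) : G.Ed :=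
  Classical.choose (not_forall.1 h)

lemma pick_src (G : DirGraph) (u : G.V) (h : ¬ IsSink G u) : G.src (pick G u h) = u :=
  not_not.1 (Classical.choose_spec (not_forall.1 h))

open Classical in
/-- Greedy walk from a vertex. -/
noncomputable def seqV (G : DirGraph) (w : G.V) : ℕ → G.V
  | 0 => w
  | n + 1 =>
    if h : IsSink G (seqV G w n) ∨ IsInfEmitter G (seqV G w n) then seqV G w n
    else G.rng (pick G (seqV G w n) (fun hs => h (Or.inl hs)))

/-- From every vertex there is a boundary path. -/
lemma exists_bpath (G : DirGraph) (w : G.V) : ∃ x : BPS G, x.1.start = w := by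
  classical
  by_cases hstop : ∃ n, IsSink G (seqV G w n) ∨ IsInfEmitter G (seqV G w n)
  · -- the walk hits a sink or infinite emitter: finite boundary path
    set n := Nat.find hstop with hn
    have hmin : ∀ m, m < n → ¬(IsSink G (seqV G w m) ∨ IsInfEmitter G (seqV G w m)) :=
      fun m hm => Nat.find_min hstop hm
    have hspec : IsSink G (seqV G w n) ∨ IsInfEmitter G (seqV G w n) := Nat.find_spec hstop
    clear_value n
    let g : (i : ℕ) → i < n → G.Ed := fun i hi =>
      pick G (seqV G w i) (fun hs => hmin i hi (Or.inl hs))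
    have hgsrc : ∀ i (hi : i < n), G.src (g i hi) = seqV G w i := fun i hi => pick_src _ _ _
    have hstep : ∀ i (hi : i < n), seqV G w (i + 1) = G.rng (g i hi) := by
      intro i hi
      simp only [seqV]
      rw [dif_neg (hmin i hi)]
    set p : FinPath G := ⟨w, List.ofFn (fun i : Fin n => g i i.2)⟩ with hp
    have hrange : p.range = seqV G w n := by
      rcases n with _ | m
      · simp [FinPath.range, hp]
        rfl
      · have hne : List.ofFn (fun i : Fin (m + 1) => g i i.2) ≠ [] := by
          simp [List.ofFn_eq_nil_iff]
        simp only [FinPath.range, hp, List.getLast?_eq_getLast_of_ne_nil hne,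
          List.getLast_ofFn, Nat.add_sub_cancel]
        rw [← hstep m (by omega)]
    have hpath : p.IsPath := by
      constructor
      · intro e he
        rcases n with _ | m
        · simp [hp] at he
        · rw [hp] at he
          rw [List.ofFn_succ] at he
          simp only [List.head?_cons, Option.mem_some_iff] at he
          subst he
          exact hgsrc 0 (by omega)
      · rw [hp]
        simp only []
        simp only [List.Chain']
        rw [List.isChain_ofFn]
        intro i hi
        show G.rng (g i (by omega)) = G.src (g (i + 1) (by omega))
        rw [hgsrc (i + 1) (by omega), ← hstep i (by omega)]
    refine ⟨⟨BPath.fin p, hpath, ?_⟩, rfl⟩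
    rw [hrange]; exact hspec
  · -- the walk never stops: infinite boundary path
    replace hstop := not_exists.mp hstop
    let f : ℕ → G.Ed := fun i => pick G (seqV G w i) (fun hs => hstop i (Or.inl hs))
    have hfsrc : ∀ i, G.src (f i) = seqV G w i := fun i => pick_src _ _ _
    have hstep : ∀ i, seqV G w (i + 1) = G.rng (f i) := by
      intro i
      simp only [seqV]
      rw [dif_neg (hstop i)]
    refine ⟨⟨BPath.inf f, fun i => ?_⟩, hfsrc 0⟩
    rw [hfsrc (i + 1), ← hstep i]

/-- Given an edge, there is a boundary path starting with that edge, with the listed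
properties. -/
lemma exists_cons (G : DirGraph) (e : G.Ed) : ∃ y : BPS G,
    y.1.start = G.src e ∧
    y.1.vertexOn (G.rng e) ∧
    y ∈ ZSet (⟨G.src e, []⟩ : FinPath G) ∧
    (∀ f : G.Ed, y ∈ ZSet (⟨G.src e, [f]⟩ : FinPath G) → f = e) := by
  obtain ⟨⟨zb, hb⟩, hz⟩ := exists_bpath G (G.rng e)
  cases zb with
  | fin p =>
    have hz' : p.start = G.rng e := hz
    obtain ⟨hip, hr⟩ : p.IsPath ∧ (IsSink G p.range ∨ IsInfEmitter G p.range) := hb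
    set q : FinPath G := ⟨G.src e, e :: p.edges⟩ with hq
    have hqpath : q.IsPath := by
      constructor
      · intro a ha
        simp only [hq, List.head?_cons, Option.mem_some_iff] at ha
        subst ha; rfl
      · rw [hq]
        refine List.isChain_cons.2 ⟨?_, hip.2⟩
        intro b hbm
        rw [hip.1 b hbm, hz']
    have hqrange : q.range = p.range := by
      cases hpe : p.edges with
      | nil => simp [FinPath.range, hq, hpe, hz']
      | cons a l =>
        simp only [FinPath.range, hq, hpe, List.getLast?_cons_cons,
          List.getLast?_eq_getLast_of_ne_nil (List.cons_ne_nil a l)]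
    have yy : BPS G := ⟨BPath.fin q, hqpath, hqrange ▸ hr⟩
    refine ⟨⟨BPath.fin q, hqpath, hqrange ▸ hr⟩, rfl, ?_,
      ⟨⟨BPath.fin q, hqpath, hqrange ▸ hr⟩, rfl, rfl⟩, ?_⟩
    · exact Or.inr ⟨e, by simp [hq], rfl⟩
    · rintro f ⟨⟨zb'', hb''⟩, hst, heq⟩
      cases zb'' with
      | fin r =>
        simp only [FinPath.catB, hq, BPath.fin.injEq, FinPath.mk.injEq,
          List.singleton_append, List.cons.injEq] at heq
        exact heq.2.1.symm
      | inf h => simp [FinPath.catB, hq] at heq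
  | inf ff =>
    have hz' : G.src (ff 0) = G.rng e := hz
    have hb' : InfIsPath G ff := hb
    set g : ℕ → G.Ed := fun n => Nat.casesOn n e ff with hg
    have hgi : InfIsPath G g := by
      intro n
      cases n with
      | zero => exact hz'.symm
      | succ m => exact hb' m
    refine ⟨⟨BPath.inf g, hgi⟩, rfl, Or.inr ⟨0, rfl⟩, ⟨⟨BPath.inf g, hgi⟩, rfl, ?_⟩, ?_⟩
    · show BPath.inf g = FinPath.catB _ (BPath.inf g)
      simp only [FinPath.catB, BPath.inf.injEq]
      funext n
      simp
    · rintro f ⟨⟨zb'', hb''⟩, hst, heq⟩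
      cases zb'' with
      | fin r => simp [FinPath.catB] at heq
      | inf h =>
        have h0 := congrFun ((BPath.inf.injEq _ _).mp heq) 0
        simpa [hg] using h0.symm

lemma trivial_mem_ZSet {G : DirGraph} {v : G.V} {μ : FinPath G} {x : BPS G}
    (hx : x.1 = BPath.fin ⟨v, []⟩) (h : x ∈ ZSet μ) : μ.start = v ∧ μ.edges = [] := by
  obtain ⟨⟨zb, hb⟩, hst, heq⟩ := h
  rw [hx] at heq
  cases zb with
  | fin p =>
    simp only [FinPath.catB, BPath.fin.injEq, FinPath.mk.injEq] at heq
    exact ⟨heq.1.symm, (List.append_eq_nil_iff.mp heq.2.symm).1⟩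
  | inf f => simp [FinPath.catB] at heq

/-- Key finiteness lemma: given a point `x = (v, [])` and for each edge `e` out of `v`
a point `y e` in `Z(v)` which is in `Z(vf)` only for `f = e`, every open set containing
`x` contains all but finitely many of the `y e`. -/
lemma key_finite {G : DirGraph} (v : G.V) (y : G.Ed → BPS G)
    (hy1 : ∀ e, G.src e = v → y e ∈ ZSet (⟨v, []⟩ : FinPath G))
    (hy2 : ∀ e, G.src e = v → ∀ f, y e ∈ ZSet (⟨v, [f]⟩ : FinPath G) → f = e)
    (x : BPS G) (hx : x.1 = BPath.fin ⟨v, []⟩) :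
    ∀ o : Set (BPS G), TopologicalSpace.GenerateOpen (Gens G) o → x ∈ o →
      {e : G.Ed | G.src e = v ∧ y e ∉ o}.Finite := by
  intro o ho
  induction ho with
  | basic U hU =>
    intro hxU
    obtain ⟨μ, F, hμ, hF, rfl⟩ := hU
    obtain ⟨hxZ, -⟩ := hxU
    obtain ⟨hμs, hμe⟩ := trivial_mem_ZSet hx hxZ
    have hμeq : μ = ⟨v, []⟩ := by rw [← hμs, ← hμe]
    subst hμeq
    refine Set.Finite.subset F.finite_toSet ?_
    rintro e ⟨hev, heo⟩
    have h1 : y e ∈ ZSet (⟨v, []⟩ : FinPath G) := hy1 e hev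
    have h2 : y e ∈ ⋃ f ∈ F, ZSet (FinPath.extend ⟨v, []⟩ f) := by
      by_contra h2
      exact heo ⟨h1, h2⟩
    simp only [Set.mem_iUnion, exists_prop] at h2
    obtain ⟨f, hfF, hyf⟩ := h2
    have hfe : f = e := hy2 e hev f hyf
    exact hfe ▸ hfF
  | univ =>
    intro _
    convert Set.finite_empty using 1
    simp
  | inter o₁ o₂ h₁ h₂ ih₁ ih₂ =>
    intro hxo
    refine Set.Finite.subset ((ih₁ hxo.1).union (ih₂ hxo.2)) ?_
    rintro e ⟨hev, heo⟩
    by_cases hmem : y e ∈ o₁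
    · exact Or.inr ⟨hev, fun hh => heo ⟨hmem, hh⟩⟩
    · exact Or.inl ⟨hev, hmem⟩
  | sUnion 𝔖 hgen ih =>
    intro hxo
    obtain ⟨t, ht, hxt⟩ := hxo
    refine Set.Finite.subset (ih t ht hxt) ?_
    rintro e ⟨hev, heo⟩
    exact ⟨hev, fun hh => heo ⟨t, ht, hh⟩⟩

/-- for `(H,S) ∈ 𝒯_E`, every breaking vertex (as a length-0 element
of `X`) lies in the closure of `U_{H,S}`; hence if `U_{H,S}` is closed then `S = B_H`. -/
theorem statement_10 (G : DirGraph) (H S : Set G.V)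
    (hher : Hereditary G H) (hsat : Saturated G H) (hS : S ⊆ BreakVerts G H) :
    (∀ v ∈ BreakVerts G H, ∀ x : BPS G, x.1 = BPath.fin ⟨v, []⟩ →
        x ∈ closure (UHS H S)) ∧
    (IsClosed (UHS H S) → S = BreakVerts G H) := by
  classical
  have main : ∀ v ∈ BreakVerts G H, ∀ x : BPS G, x.1 = BPath.fin ⟨v, []⟩ →
      x ∈ closure (UHS H S) := by
    intro v hv x hx
    rw [mem_closure_iff]
    intro o ho hxo
    have ho' : TopologicalSpace.GenerateOpen (Gens G) o := ho
    choose y hy1 hy2 hy3 hy4 using fun e : G.Ed => exists_cons G e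
    have hfin := key_finite v y (fun e he => by rw [← he]; exact hy3 e)
      (fun e he f hf => hy4 e f (by rwa [he])) x hx o ho' hxo
    obtain ⟨hvH, hinf, hTfin, -⟩ := hv
    have hbig : ({e : G.Ed | G.src e = v} \
        ({e | G.src e = v ∧ y e ∉ o} ∪ {e | G.src e = v ∧ G.rng e ∉ H})).Infinite :=
      hinf.diff (hfin.union hTfin)
    obtain ⟨e, he1, he2⟩ := hbig.nonempty
    have heo : y e ∈ o := by
      by_contra h
      exact he2 (Or.inl ⟨he1, h⟩)
    have heH : G.rng e ∈ H := by
      by_contra h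
      exact he2 (Or.inr ⟨he1, h⟩)
    exact ⟨y e, heo, Or.inl ⟨G.rng e, heH, hy2 e⟩⟩
  refine ⟨main, ?_⟩
  intro hcl
  apply Set.Subset.antisymm hS
  intro v hv
  have hb : (BPath.fin (⟨v, []⟩ : FinPath G)).IsBoundary := by
    refine ⟨⟨?_, ?_⟩, Or.inr hv.2.1⟩ <;> simp [List.Chain']
  have hx := main v hv ⟨BPath.fin ⟨v, []⟩, hb⟩ rfl
  rw [hcl.closure_eq] at hx
  cases hx with
  | inl h =>
    obtain ⟨w, hwH, hon⟩ := h
    rcases hon with h | ⟨e, he, -⟩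
    · exact absurd ((show v = w from h) ▸ hwH) hv.1
    · simp at he
  | inr h =>
    obtain ⟨p, hp, hr⟩ := h
    have hpe : p = ⟨v, []⟩ := ((BPath.fin.injEq _ _).mp hp).symm
    rw [hpe] at hr
    exact hr

end GraphLPA
end

section
/- Let H₁ and H₂ be nonempty hereditary and saturated subsets of E⁰ with H₁ ∩ H₂ = ∅ such that for every vertex v ∈ E⁰ ∖ (H₁ ∪ H₂) the set of finite paths with source v that are H₁-compatible or H₂-compatible is nonempty and finite. Then H₁ satisfies conditions (a) and (b). -/
namespace GraphLPA

variable {G : DirGraph}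

lemma isPath_append {μ q : FinPath G} (hμ : μ.IsPath) (hq : q.IsPath)
    (h : q.start = μ.range) : (⟨μ.start, μ.edges ++ q.edges⟩ : FinPath G).IsPath := by
  obtain ⟨hμ1, hμ2⟩ := hμ
  obtain ⟨hq1, hq2⟩ := hq
  constructor
  · intro e he
    cases hμe : μ.edges with
    | nil =>
      rw [hμe] at he
      simp only [List.nil_append] at he
      have := hq1 e he
      rw [this, h]
      simp [FinPath.range, hμe]
    | cons a l =>
      rw [hμe] at he
      simp only [List.cons_append, List.head?_cons, Option.mem_some_iff] at he
      subst he
      exact hμ1 _ (by rw [hμe]; rfl)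
  · refine List.isChain_append.mpr ⟨hμ2, hq2, ?_⟩
    intro x hx y hy
    have hy' : G.src y = q.start := hq1 y hy
    have hx' : μ.edges.getLast? = some x := Option.mem_def.mp hx
    rw [hy', h]
    simp [FinPath.range, hx']

lemma getLast?_append_right {α : Type*} {l₁ l₂ : List α} (h : l₂ ≠ []) :
    (l₁ ++ l₂).getLast? = l₂.getLast? := by
  induction l₂ using List.reverseRecOn with
  | nil => exact absurd rfl h
  | append_singleton l a _ =>
    rw [← List.append_assoc]
    simp [List.getLast?_concat]

lemma range_append {μ q : FinPath G} (h : q.edges ≠ []) :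
    (⟨μ.start, μ.edges ++ q.edges⟩ : FinPath G).range = q.range := by
  obtain ⟨x, hx⟩ := Option.isSome_iff_exists.mp (List.getLast?_isSome.mpr h)
  simp [FinPath.range, getLast?_append_right h, hx]

lemma hcompat_append {H : Set G.V} {μ q : FinPath G} (hμ : μ.IsPath)
    (hq : HCompatible H q) (h : q.start = μ.range) :
    HCompatible H ⟨μ.start, μ.edges ++ q.edges⟩ := by
  obtain ⟨hq1, hq2, hq3, hq4⟩ := hq
  refine ⟨isPath_append hμ hq1 h, by simp [hq2], ?_, ?_⟩
  · rw [range_append hq2]; exact hq3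
  · intro e he
    simp only [getLast?_append_right hq2] at he
    exact hq4 e he

lemma hered_range {H : Set G.V} (hher : Hereditary G H) :
    ∀ (l : List G.Ed) (v : G.V), (⟨v, l⟩ : FinPath G).IsPath → v ∈ H →
      (⟨v, l⟩ : FinPath G).range ∈ H := by
  intro l
  induction l with
  | nil => intro v _ hvm; simpa [FinPath.range] using hvm
  | cons e l ih =>
    intro v hp hvm
    have hch := List.isChain_cons.mp hp.2
    have hsrc : G.src e = v := hp.1 e rfl
    have hrng : G.rng e ∈ H := hher e (by rwa [hsrc])
    have hp' : (⟨G.rng e, l⟩ : FinPath G).IsPath := ⟨fun x hx => (hch.1 x hx).symm, hch.2⟩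
    have hind := ih (G.rng e) hp' hrng
    cases l with
    | nil => simpa [FinPath.range] using hrng
    | cons f l' => simpa [FinPath.range, List.getLast?_cons_cons, List.getLast?_cons] using hind

lemma not_mem_of_pathTo {H K : Set G.V} (hK : Hereditary G K) (hdisj : H ∩ K = ∅)
    {v : G.V} (hp : (PathTo v H).Nonempty) : v ∉ K := by
  intro hvK
  obtain ⟨p, hp1, hp2, _, hp4⟩ := hp
  have hr : p.range ∈ K := hered_range hK p.edges p.start hp1 (hp2 ▸ hvK)
  exact Set.eq_empty_iff_forall_notMem.mp hdisj p.range ⟨hp4, hr⟩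

/-- if `H₁, H₂` are disjoint nonempty hereditary saturated sets such
that every vertex outside `H₁ ∪ H₂` emits at least one but only finitely many
`H₁`- or `H₂`-compatible paths, then `H₁` satisfies conditions (a) and (b). -/
theorem statement_14 (G : DirGraph) (H₁ H₂ : Set G.V)
    (hher₁ : Hereditary G H₁) (hsat₁ : Saturated G H₁) (hne₁ : H₁.Nonempty)
    (hher₂ : Hereditary G H₂) (hsat₂ : Saturated G H₂) (hne₂ : H₂.Nonempty)
    (hdisj : H₁ ∩ H₂ = ∅)
    (hv : ∀ v : G.V, v ∉ H₁ ∪ H₂ →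
      { p : FinPath G | p.start = v ∧ (HCompatible H₁ p ∨ HCompatible H₂ p) }.Nonempty ∧
      { p : FinPath G | p.start = v ∧ (HCompatible H₁ p ∨ HCompatible H₂ p) }.Finite) :
    CondA G H₁ ∧ CondB G H₁ (BreakVerts G H₁) := by
  classical
  constructor
  · -- Condition (a)
    rintro f hf ⟨h0, hn⟩
    by_contra hcon
    push_neg at hcon
    have hne : ∀ N, (PathTo (G.rng (f N)) H₁).Nonempty := hcon
    have hnH₂ : ∀ N, G.rng (f N) ∉ H₂ := fun N =>
      not_mem_of_pathTo hher₂ hdisj (hne N)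
    have hv0H₂ : G.src (f 0) ∉ H₂ := fun h => hnH₂ 0 (hher₂ (f 0) h)
    have hv₀ : G.src (f 0) ∉ H₁ ∪ H₂ := by simp [h0, hv0H₂]
    have hμ : ∀ n : ℕ, ∃ p : FinPath G,
        (p.start = G.src (f 0) ∧ (HCompatible H₁ p ∨ HCompatible H₂ p)) ∧
        n < p.edges.length := by
      intro n
      obtain ⟨q, hqs, hqc⟩ := (hv (G.rng (f n)) (by simp [hn n, hnH₂ n])).1
      set L : List G.Ed := (List.range (n + 1)).map f with hLdef
      have hLlast : L.getLast? = some (f n) := by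
        rw [hLdef, List.range_succ, List.map_append]
        simp [List.getLast?_concat]
      have hμpath : (⟨G.src (f 0), L⟩ : FinPath G).IsPath := by
        constructor
        · intro e he
          rw [hLdef, List.range_succ_eq_map] at he
          simp only [List.map_cons, List.head?_cons, Option.mem_some_iff] at he
          rw [he]
        · rw [hLdef]; change List.IsChain _ _; rw [List.isChain_map, List.isChain_range_succ]
          intro m _
          exact hf m
      have hμrange : (⟨G.src (f 0), L⟩ : FinPath G).range = G.rng (f n) := by
        simp [FinPath.range, hLlast]
      have hqs' : q.start = (⟨G.src (f 0), L⟩ : FinPath G).range := by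
        rw [hqs, hμrange]
      refine ⟨⟨G.src (f 0), L ++ q.edges⟩, ⟨rfl, ?_⟩, ?_⟩
      · rcases hqc with h | h
        · exact Or.inl (hcompat_append hμpath h hqs')
        · exact Or.inr (hcompat_append hμpath h hqs')
      · simp only [hLdef, List.length_append, List.length_map, List.length_range]
        omega
    obtain ⟨b, hb⟩ := ((hv _ hv₀).2.image (fun p => p.edges.length)).bddAbove
    obtain ⟨p, hp, hlen⟩ := hμ b
    have : p.edges.length ≤ b := hb ⟨p, hp, rfl⟩
    omega
  · -- Condition (b)
    intro v hS
    by_contra hvB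
    have hv1 : v ∉ H₁ := fun h => hvB (Or.inl h)
    have hv2 : v ∉ H₂ := by
      obtain ⟨e, he⟩ := hS.nonempty
      intro h
      exact not_mem_of_pathTo hher₂ hdisj he.2 (hher₂ e (he.1.symm ▸ h))
    have hvout : v ∉ H₁ ∪ H₂ := by simp [hv1, hv2]
    set S := { e : G.Ed | G.src e = v ∧ (PathTo (G.rng e) H₁).Nonempty } with hSdef
    have hg : ∀ e ∈ S, ∃ p : FinPath G,
        (p.start = v ∧ (HCompatible H₁ p ∨ HCompatible H₂ p)) ∧
        p.edges.head? = some e := by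
      intro e he
      have hesrc : G.src e = v := he.1
      have hμpath : (⟨v, [e]⟩ : FinPath G).IsPath := by
        constructor
        · intro x hx
          simp only [List.head?_cons, Option.mem_some_iff] at hx
          subst hx
          exact hesrc
        · exact List.isChain_singleton _
      by_cases hr : G.rng e ∈ H₁
      · refine ⟨⟨v, [e]⟩, ⟨rfl, Or.inl ?_⟩, rfl⟩
        refine ⟨hμpath, by simp, ?_, ?_⟩
        · simpa [FinPath.range] using hr
        · intro x hx
          simp only [List.getLast?_singleton, Option.mem_some_iff] at hx
          subst hx
          rw [hesrc]
          exact hvB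
      · have hr2 : G.rng e ∉ H₂ := not_mem_of_pathTo hher₂ hdisj he.2
        obtain ⟨q, hqs, hqc⟩ := (hv (G.rng e) (by simp [hr, hr2])).1
        have hqs' : q.start = (⟨v, [e]⟩ : FinPath G).range := by
          rw [hqs]; simp [FinPath.range]
        refine ⟨⟨v, [e] ++ q.edges⟩, ⟨rfl, ?_⟩, ?_⟩
        · rcases hqc with h | h
          · exact Or.inl (hcompat_append hμpath h hqs')
          · exact Or.inr (hcompat_append hμpath h hqs')
        · simp
    have hg' : ∀ e : G.Ed, ∃ p : FinPath G, e ∈ S →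
        (p.start = v ∧ (HCompatible H₁ p ∨ HCompatible H₂ p)) ∧
        p.edges.head? = some e := by
      intro e
      by_cases he : e ∈ S
      · obtain ⟨p, h1, h2⟩ := hg e he
        exact ⟨p, fun _ => ⟨h1, h2⟩⟩
      · exact ⟨⟨v, []⟩, fun h => absurd h he⟩
    choose g hgp using hg'
    have hinj : Set.InjOn g S := by
      intro a ha b hb hab
      have h1 := (hgp a ha).2
      have h2 := (hgp b hb).2
      rw [hab, h2] at h1
      exact Option.some_injective _ h1.symm
    have hsub : g '' S ⊆ { p : FinPath G | p.start = v ∧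
        (HCompatible H₁ p ∨ HCompatible H₂ p) } := by
      rintro _ ⟨e, he, rfl⟩
      exact (hgp e he).1
    exact (hS.image hinj) ((hv v hvout).2.subset hsub)

end GraphLPA
end
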